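/- arXiv:1707.04516 — 6 statements merged into one kernel-verified Lean document; each statement's English description precedes it below -/
import Mathlib

section
/- Let G be a locally compact, Hausdorff, second-countable étale groupoid with compact unit space G⁰. Then G is minimal if and only if for every nonempty open subset U ⊆ G⁰ there exist finitely many open bisections E₁, …, Eₙ of G such that ⋃ⱼ U_{E_j} = G⁰. -/
open Set

/-- A (locally compact, Hausdorff, second-countable) étale groupoid structure on a
topological space `G`.  Multiplication is formalized as a total function whose groupoid
axioms are only imposed on composable pairs (those `(α, β)` with `s α = r β`). -/
structure EtaleGroupoid (G : Type*) [TopologicalSpace G] where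
  unitSpace : Set G
  r : G → G
  s : G → G
  mul : G → G → G
  inv : G → G
  r_mem : ∀ α, r α ∈ unitSpace
  s_mem : ∀ α, s α ∈ unitSpace
  r_unit : ∀ u ∈ unitSpace, r u = u
  s_unit : ∀ u ∈ unitSpace, s u = u
  r_mul : ∀ α β, s α = r β → r (mul α β) = r α
  s_mul : ∀ α β, s α = r β → s (mul α β) = s β
  mul_assoc' : ∀ α β γ, s α = r β → s β = r γ → mul (mul α β) γ = mul α (mul β γ)
  unit_mul : ∀ α, mul (r α) α = α
  mul_unit : ∀ α, mul α (s α) = α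
  r_inv : ∀ α, r (inv α) = s α
  s_inv : ∀ α, s (inv α) = r α
  mul_inv : ∀ α, mul α (inv α) = r α
  inv_mul : ∀ α, mul (inv α) α = s α
  /-- multiplication is continuous on the set of composable pairs -/
  continuousOn_mul : ContinuousOn (fun p : G × G => mul p.1 p.2) {p : G × G | s p.1 = r p.2}
  continuous_inv : Continuous inv
  /-- étale: the range map is a local homeomorphism onto the unit space -/
  isLocalHomeomorph_r : IsLocalHomeomorph fun α => (⟨r α, r_mem α⟩ : unitSpace)
  /-- étale: the source map is a local homeomorphism onto the unit space -/
  isLocalHomeomorph_s : IsLocalHomeomorph fun α => (⟨s α, s_mem α⟩ : unitSpace)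

namespace EtaleGroupoid

variable {G : Type*} [TopologicalSpace G] (𝒢 : EtaleGroupoid G)

/-- A bisection: a set on which both `r` and `s` are injective. -/
def IsBisection (E : Set G) : Prop := Set.InjOn 𝒢.r E ∧ Set.InjOn 𝒢.s E

def IsOpenBisection (E : Set G) : Prop := IsOpen E ∧ 𝒢.IsBisection E

def IsCompactOpenBisection (E : Set G) : Prop := IsCompact E ∧ IsOpen E ∧ 𝒢.IsBisection E

/-- `U` is an open subset of the unit space `G⁰` (in the subspace topology). -/
def IsUnitOpen (U : Set G) : Prop :=
  U ⊆ 𝒢.unitSpace ∧ ∃ V : Set G, IsOpen V ∧ U = V ∩ 𝒢.unitSpace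

/-- `U_E = r(EU) = {r α : α ∈ E, s α ∈ U}`. -/
def ranOn (E U : Set G) : Set G := 𝒢.r '' {α ∈ E | 𝒢.s α ∈ U}

/-- `G` is minimal if every orbit `r(Gu)` is dense in the unit space. -/
def Minimal : Prop :=
  ∀ u ∈ 𝒢.unitSpace, 𝒢.unitSpace ⊆ closure (𝒢.r '' {α | 𝒢.s α = u})

/-- `G` is ample if its topology has a basis of compact open bisections. -/
def Ample : Prop := ∀ (α : G) (V : Set G), IsOpen V → α ∈ V →
  ∃ E : Set G, 𝒢.IsCompactOpenBisection E ∧ α ∈ E ∧ E ⊆ V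

end EtaleGroupoid

namespace EtaleGroupoid

variable {G : Type*} [TopologicalSpace G] (𝒢 : EtaleGroupoid G)

lemma continuous_r' : Continuous 𝒢.r :=
  continuous_subtype_val.comp 𝒢.isLocalHomeomorph_r.continuous

lemma continuous_s' : Continuous 𝒢.s :=
  continuous_subtype_val.comp 𝒢.isLocalHomeomorph_s.continuous

lemma exists_openBisection_mem (α : G) : ∃ E, 𝒢.IsOpenBisection E ∧ α ∈ E := by
  obtain ⟨er, hαr, hfr⟩ := 𝒢.isLocalHomeomorph_r α
  obtain ⟨es, hαs, hfs⟩ := 𝒢.isLocalHomeomorph_s α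
  refine ⟨er.source ∩ es.source, ⟨er.open_source.inter es.open_source, ?_, ?_⟩, hαr, hαs⟩
  · intro a ha b hb hab
    apply er.injOn ha.1 hb.1
    rw [← hfr]
    exact Subtype.ext hab
  · intro a ha b hb hab
    apply es.injOn ha.2 hb.2
    rw [← hfs]
    exact Subtype.ext hab

lemma ranOn_isUnitOpen {E U : Set G} (hE : 𝒢.IsOpenBisection E) (hU : 𝒢.IsUnitOpen U) :
    ∃ W : Set G, IsOpen W ∧ 𝒢.ranOn E U = W ∩ 𝒢.unitSpace := by
  obtain ⟨hUsub, V, hV, rfl⟩ := hU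
  set A : Set G := E ∩ 𝒢.s ⁻¹' V with hA
  have hAopen : IsOpen A := hE.1.inter (hV.preimage 𝒢.continuous_s')
  set f : G → 𝒢.unitSpace := fun α => (⟨𝒢.r α, 𝒢.r_mem α⟩ : 𝒢.unitSpace) with hf
  have hopen : IsOpen (f '' A) := 𝒢.isLocalHomeomorph_r.isOpenMap A hAopen
  rw [isOpen_induced_iff] at hopen
  obtain ⟨W, hW, hWeq⟩ := hopen
  refine ⟨W, hW, ?_⟩
  have h1 : {α ∈ E | 𝒢.s α ∈ V ∩ 𝒢.unitSpace} = A := by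
    ext a
    simp only [hA, Set.mem_inter_iff, Set.mem_sep_iff, Set.mem_preimage]
    exact ⟨fun ⟨h1, h2⟩ => ⟨h1, h2.1⟩, fun ⟨h1, h2⟩ => ⟨h1, h2, 𝒢.s_mem a⟩⟩
  have h2 : 𝒢.r '' A = Subtype.val '' (f '' A) := by
    rw [Set.image_image]
  rw [EtaleGroupoid.ranOn, h1, h2, ← hWeq, Subtype.image_preimage_coe]
  exact Set.inter_comm _ _

end EtaleGroupoid

/-- An étale groupoid with compact unit space is minimal if and only if
for every nonempty open subset `U` of the unit space there are finitely many open
bisections `E₁, …, Eₙ` with `⋃ⱼ U_{Eⱼ} = G⁰`. -/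
theorem minimal_iff_open_bisection_cover {G : Type*} [TopologicalSpace G]
    [LocallyCompactSpace G] [T2Space G] [SecondCountableTopology G]
    (𝒢 : EtaleGroupoid G) (hcompact : IsCompact 𝒢.unitSpace) :
    𝒢.Minimal ↔
      ∀ U : Set G, 𝒢.IsUnitOpen U → U.Nonempty →
        ∃ (n : ℕ) (E : Fin n → Set G), (∀ j, 𝒢.IsOpenBisection (E j)) ∧
          (⋃ j, 𝒢.ranOn (E j) U) = 𝒢.unitSpace := by
  constructor
  · -- minimal → cover
    intro hmin U hU hUne
    obtain ⟨x, hx⟩ := hUne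
    have hUsub := hU.1
    obtain ⟨V, hV, hUV⟩ := hU.2
    -- for each unit v, find an open bisection and open W with v ∈ W, ranOn E U = W ∩ G⁰
    have key : ∀ v : 𝒢.unitSpace, ∃ (E W : Set G), 𝒢.IsOpenBisection E ∧ IsOpen W ∧
        𝒢.ranOn E U = W ∩ 𝒢.unitSpace ∧ (v : G) ∈ W := by
      rintro ⟨v, hv⟩
      -- density of the orbit of v meets U
      have hxcl : x ∈ closure (𝒢.r '' {α | 𝒢.s α = v}) := hmin v hv (hUsub hx)
      have hxV : x ∈ V := by rw [hUV] at hx; exact hx.1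
      obtain ⟨y, hyV, hy⟩ := mem_closure_iff.mp hxcl V hV hxV
      obtain ⟨α, hαs, hαr⟩ := hy
      have hrU : 𝒢.r α ∈ U := by
        rw [hUV]
        exact ⟨hαr ▸ hyV, 𝒢.r_mem α⟩
      set β := 𝒢.inv α with hβ
      obtain ⟨E, hE, hβE⟩ := 𝒢.exists_openBisection_mem β
      have hvran : v ∈ 𝒢.ranOn E U := by
        refine ⟨β, ⟨hβE, ?_⟩, ?_⟩
        · rw [hβ, 𝒢.s_inv]; exact hrU
        · rw [hβ, 𝒢.r_inv]; exact hαs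
      obtain ⟨W, hW, hWeq⟩ := 𝒢.ranOn_isUnitOpen hE hU
      refine ⟨E, W, hE, hW, hWeq, ?_⟩
      rw [hWeq] at hvran
      exact hvran.1
    choose Ef Wf hEf hWf hWeq hvW using key
    have hcover : 𝒢.unitSpace ⊆ ⋃ v : 𝒢.unitSpace, Wf v := by
      intro v hv
      exact Set.mem_iUnion.mpr ⟨⟨v, hv⟩, hvW ⟨v, hv⟩⟩
    obtain ⟨t, ht⟩ := hcompact.elim_finite_subcover (fun v : 𝒢.unitSpace => Wf v)
      (fun v => hWf v) hcover
    refine ⟨t.card, fun j => Ef (t.equivFin.symm j : {x // x ∈ t}), fun j => hEf _, ?_⟩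
    apply Set.Subset.antisymm
    · apply Set.iUnion_subset
      intro j
      rw [hWeq]
      exact Set.inter_subset_right
    · intro v hv
      obtain ⟨w, hwt, hvw⟩ := Set.mem_iUnion₂.mp (ht hv)
      refine Set.mem_iUnion.mpr ⟨t.equivFin ⟨w, hwt⟩, ?_⟩
      simp only [Equiv.symm_apply_apply]
      rw [hWeq]
      exact ⟨hvw, hv⟩
  · -- cover → minimal
    intro hcov u hu
    by_contra hcl
    rw [Set.not_subset] at hcl
    obtain ⟨v, hv, hvcl⟩ := hcl
    set V := (closure (𝒢.r '' {α | 𝒢.s α = u}))ᶜ with hVdef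
    have hVopen : IsOpen V := isClosed_closure.isOpen_compl
    set U := V ∩ 𝒢.unitSpace with hUdef
    have hUopen : 𝒢.IsUnitOpen U := ⟨Set.inter_subset_right, V, hVopen, rfl⟩
    have hUne : U.Nonempty := ⟨v, hvcl, hv⟩
    obtain ⟨n, E, hE, hEeq⟩ := hcov U hUopen hUne
    have hu' : u ∈ ⋃ j, 𝒢.ranOn (E j) U := hEeq ▸ hu
    obtain ⟨j, α, ⟨hαE, hαs⟩, hαr⟩ := Set.mem_iUnion.mp hu'
    -- inv α witnesses that s α ∈ orbit of u
    have : 𝒢.s α ∈ 𝒢.r '' {β | 𝒢.s β = u} := by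
      refine ⟨𝒢.inv α, ?_, 𝒢.r_inv α⟩
      rw [Set.mem_setOf_eq, 𝒢.s_inv, hαr]
    exact hαs.1 (subset_closure this)
end

section
/- Let G be a locally compact, Hausdorff, second-countable ample étale groupoid with compact unit space G⁰. If G satisfies the coboundary condition, i.e., H_G ∩ C(G⁰, ℤ)⁺ = {0}, then G is completely non-paradoxical. -/
open Set

namespace EtaleGroupoid

variable {G : Type*} [TopologicalSpace G] (𝒢 : EtaleGroupoid G)

/-- `C_c(G⁰, ℤ)⁺`: compactly supported functions that are continuous on the unit space,
vanish off the unit space, and take nonnegative values. -/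
def CcPos : AddSubmonoid (G → ℤ) where
  carrier := {f | ContinuousOn f 𝒢.unitSpace ∧ (∀ x ∉ 𝒢.unitSpace, f x = 0) ∧
    HasCompactSupport f ∧ ∀ x, 0 ≤ f x}
  zero_mem' := ⟨continuousOn_const, fun _ _ => rfl, HasCompactSupport.zero, fun _ => le_refl 0⟩
  add_mem' := fun hf hg =>
    ⟨hf.1.add hg.1, fun x hx => by simp [Pi.add_apply, hf.2.1 x hx, hg.2.1 x hx],
      hf.2.2.1.add hg.2.2.1, fun x => add_nonneg (hf.2.2.2 x) (hg.2.2.2 x)⟩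

/-- The indicator function `1_{s(E)}`. -/
noncomputable def srcInd (E : Set G) : G → ℤ := Set.indicator (𝒢.s '' E) 1

/-- The indicator function `1_{r(E)}`. -/
noncomputable def ranInd (E : Set G) : G → ℤ := Set.indicator (𝒢.r '' E) 1

/-- The relation `f ∼_G g`: there are finitely many compact open bisections `E₁, …, Eₙ`
with `f = Σᵢ 1_{s(Eᵢ)}` and `g = Σᵢ 1_{r(Eᵢ)}`. -/
def TypeRel (f g : G → ℤ) : Prop :=
  ∃ L : List (Set G), (∀ E ∈ L, 𝒢.IsCompactOpenBisection E) ∧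
    f = (L.map 𝒢.srcInd).sum ∧ g = (L.map 𝒢.ranInd).sum

theorem typeRel_add {f₁ g₁ f₂ g₂ : G → ℤ} (h₁ : 𝒢.TypeRel f₁ g₁) (h₂ : 𝒢.TypeRel f₂ g₂) :
    𝒢.TypeRel (f₁ + f₂) (g₁ + g₂) := by
  obtain ⟨L, hL, hf, hg⟩ := h₁
  obtain ⟨M, hM, hf', hg'⟩ := h₂
  refine ⟨L ++ M, ?_, ?_, ?_⟩
  · intro E hE
    rcases List.mem_append.mp hE with h | h
    exacts [hL E h, hM E h]
  · simp [hf, hf', List.sum_append]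
  · simp [hg, hg', List.sum_append]

end EtaleGroupoid
namespace EtaleGroupoid

variable {G : Type*} [TopologicalSpace G] (𝒢 : EtaleGroupoid G)

/-- `A` is `(k, l)`-paradoxical: there are compact open bisections `E₁, …, Eₙ` with
`k·1_A ≤ Σᵢ 1_{s(Eᵢ)}` and `Σᵢ 1_{r(Eᵢ)} ≤ l·1_A` (pointwise). -/
def IsParadoxical (A : Set G) (k l : ℕ) : Prop :=
  ∃ L : List (Set G), (∀ E ∈ L, 𝒢.IsCompactOpenBisection E) ∧
    k • Set.indicator A (1 : G → ℤ) ≤ (L.map 𝒢.srcInd).sum ∧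
    (L.map 𝒢.ranInd).sum ≤ l • Set.indicator A (1 : G → ℤ)

/-- `G` is completely non-paradoxical: no nonempty compact open subset of the unit space
is `(k, l)`-paradoxical for any integers `k > l > 0`. -/
def CompletelyNonParadoxical : Prop :=
  ∀ A : Set G, 𝒢.IsUnitOpen A → IsCompact A → A.Nonempty →
    ∀ k l : ℕ, 0 < l → l < k → ¬ 𝒢.IsParadoxical A k l

end EtaleGroupoid
namespace EtaleGroupoid

variable {G : Type*} [TopologicalSpace G] (𝒢 : EtaleGroupoid G)

/-- The coboundary subgroup `H_G = ⟨1_{s(E)} − 1_{r(E)} : E a compact open bisection⟩`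
of `C(G⁰, ℤ)`. -/
noncomputable def coboundaryGroup : AddSubgroup (G → ℤ) :=
  AddSubgroup.closure
    {g | ∃ E : Set G, 𝒢.IsCompactOpenBisection E ∧ g = 𝒢.srcInd E - 𝒢.ranInd E}

end EtaleGroupoid

private lemma sum_map_sub_aux {G : Type*} [TopologicalSpace G] (𝒢 : EtaleGroupoid G)
    (L : List (Set G)) :
    (L.map (fun E => 𝒢.srcInd E - 𝒢.ranInd E)).sum =
      (L.map 𝒢.srcInd).sum - (L.map 𝒢.ranInd).sum := by
  induction L with
  | nil => simp
  | cons E T ih => simp only [List.map_cons, List.sum_cons, ih]; abel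

/-- If an ample étale groupoid `G` with compact unit space satisfies
the coboundary condition `H_G ∩ C(G⁰, ℤ)⁺ = {0}`, then `G` is completely
non-paradoxical. -/
theorem completelyNonParadoxical_of_coboundary {G : Type*} [TopologicalSpace G]
    [LocallyCompactSpace G] [T2Space G] [SecondCountableTopology G]
    (𝒢 : EtaleGroupoid G) (hample : 𝒢.Ample) (hcompact : IsCompact 𝒢.unitSpace)
    (hcb : ∀ f ∈ 𝒢.coboundaryGroup, 0 ≤ f → f = 0) :
    𝒢.CompletelyNonParadoxical := by
  intro A hA hAc hAne k l hl hlk hpara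
  obtain ⟨L, hL, hk, hlle⟩ := hpara
  set f : G → ℤ := (L.map (fun E => 𝒢.srcInd E - 𝒢.ranInd E)).sum with hfdef
  have hfsum : f = (L.map 𝒢.srcInd).sum - (L.map 𝒢.ranInd).sum :=
    sum_map_sub_aux 𝒢 L
  have hmem : f ∈ 𝒢.coboundaryGroup := by
    refine list_sum_mem ?_
    intro g hg
    obtain ⟨E, hE, rfl⟩ := List.mem_map.mp hg
    exact AddSubgroup.subset_closure ⟨E, hL E hE, rfl⟩
  have hnonneg : (0 : G → ℤ) ≤ f := by
    intro x
    have h1 := hk x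
    have h2 := hlle x
    have hind : (0:ℤ) ≤ Set.indicator A (1 : G → ℤ) x := by
      by_cases hx : x ∈ A <;> simp [hx]
    have : (l : ℤ) * Set.indicator A (1 : G → ℤ) x ≤
        (k : ℤ) * Set.indicator A (1 : G → ℤ) x := by
      apply mul_le_mul_of_nonneg_right _ hind
      exact_mod_cast hlk.le
    simp only [Pi.smul_apply, nsmul_eq_mul] at h1 h2
    have := le_trans h2 (le_trans this h1)
    have hfx : f x = (L.map 𝒢.srcInd).sum x - (L.map 𝒢.ranInd).sum x := by
      rw [hfsum]; rfl
    simp only [Pi.zero_apply, hfx]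
    omega
  have hf0 : f = 0 := hcb f hmem hnonneg
  have heq : (L.map 𝒢.srcInd).sum = (L.map 𝒢.ranInd).sum := by
    have := hfsum.symm.trans hf0
    exact sub_eq_zero.mp this
  obtain ⟨a, ha⟩ := hAne
  have h1 := hk a
  have h2 := hlle a
  rw [heq] at h1
  have := le_trans h1 h2
  simp only [Pi.smul_apply, nsmul_eq_mul, Set.indicator_of_mem ha, Pi.one_apply,
    mul_one] at this
  have : k ≤ l := by exact_mod_cast this
  omega
end

section
/- Let S be an abelian monoid equipped with a preorder extending the algebraic ordering (x ≤ y whenever x + z = y for some z), and suppose S is almost unperforated. If θ ∈ S satisfies (k+1)θ ≤ kθ for some positive integer k, then 2θ ≤ θ, i.e., θ is properly infinite. -/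
/-!
From `(k + 1)θ ≤ kθ` one absorbs any number of further copies of `θ`, so
`(k + 1)(2θ) = (2k + 2)θ ≤ kθ`; almost unperforation with `k + 1 > k` then gives `2θ ≤ θ`.
-/

theorem add_nsmul_le_nsmul_of_succ_nsmul_le {M : Type*} [AddCommMonoid M] [Preorder M]
    [AddLeftMono M] {a : M} {k : ℕ} (h : (k + 1) • a ≤ k • a) (m : ℕ) :
    (k + m) • a ≤ k • a := by
  induction m with
  | zero => simp
  | succ m ih =>
    calc (k + (m + 1)) • a = a + (k + m) • a := by rw [← add_assoc, succ_nsmul']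
      _ ≤ a + k • a := add_le_add_right ih a
      _ = (k + 1) • a := (succ_nsmul' a k).symm
      _ ≤ k • a := h

theorem properlyInfinite_of_almostUnperforated_general {S : Type*} [AddCommMonoid S] [Preorder S]
    [CovariantClass S S (· + ·) (· ≤ ·)]
    (hunperf : ∀ (θ η : S) (n m : ℕ), n • θ ≤ m • η → m < n → θ ≤ η)
    (θ : S) (k : ℕ) (h : (k + 1) • θ ≤ k • θ) :
    2 • θ ≤ θ := by
  have hdouble : (k + 1) • (2 • θ) ≤ k • θ := by
    rw [smul_smul, show (k + 1) * 2 = k + (k + 2) by ring]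
    exact add_nsmul_le_nsmul_of_succ_nsmul_le h (k + 2)
  exact hunperf (2 • θ) θ (k + 1) k hdouble k.lt_succ_self

/-- **Statement 11.** Let `S` be a preordered abelian monoid (the preorder is
translation-invariant and extends the algebraic ordering) which is almost unperforated.
If `θ ∈ S` satisfies `(k+1)θ ≤ kθ` for some positive integer `k`, then `2θ ≤ θ`,
i.e. `θ` is properly infinite. -/
theorem properlyInfinite_of_almostUnperforated {S : Type*} [AddCommMonoid S] [Preorder S]
    [CovariantClass S S (· + ·) (· ≤ ·)]
    (halg : ∀ x y : S, (∃ z, x + z = y) → x ≤ y)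
    (hunperf : ∀ (θ η : S) (n m : ℕ), n • θ ≤ m • η → m < n → θ ≤ η)
    (θ : S) (k : ℕ) (hk : 0 < k) (h : (k + 1) • θ ≤ k • θ) :
    2 • θ ≤ θ :=
  properlyInfinite_of_almostUnperforated_general hunperf θ k h
end

section
/- (Tarski) Let (S, +) be an abelian monoid equipped with the algebraic ordering (x ≤ y iff x + z = y for some z), and let θ ∈ S. The following are equivalent: (i) (n+1)θ ≰ nθ for all n ∈ ℕ, that is, θ is completely non-paradoxical; (ii) there is a non-trivial state ν : S → [0, ∞] with ν(θ) = 1. -/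
open scoped ENNReal

namespace TarskiAux

variable {S : Type*} [AddCommMonoid S]

/-- The algebraic preorder on an abelian monoid. -/
def rle (a b : S) : Prop := ∃ z, a + z = b

theorem rle_refl (a : S) : rle a a := ⟨0, add_zero a⟩

theorem rle_trans {a b c : S} (h : rle a b) (h' : rle b c) : rle a c := by
  obtain ⟨z, hz⟩ := h; obtain ⟨w, hw⟩ := h'
  exact ⟨z + w, by rw [← add_assoc, hz, hw]⟩

theorem rle_self_add (a c : S) : rle a (a + c) := ⟨c, rfl⟩

theorem rle_add {a b c d : S} (h : rle a b) (h' : rle c d) : rle (a + c) (b + d) := by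
  obtain ⟨z, hz⟩ := h; obtain ⟨w, hw⟩ := h'
  exact ⟨z + w, by rw [← hz, ← hw]; abel⟩

theorem rle_smul (m : ℕ) {a b : S} (h : rle a b) : rle (m • a) (m • b) := by
  obtain ⟨z, hz⟩ := h
  exact ⟨m • z, by rw [← smul_add, hz]⟩

/-- Iteration lemma, "upper" form. -/
theorem iterUp {w₁ w₂ x : S} {n k : ℕ}
    (h : rle (w₁ + (n + k) • x) (w₂ + n • x)) (m : ℕ) :
    rle (m • w₁ + (n + m * k) • x) (m • w₂ + n • x) := by
  induction m with
  | zero => simpa using rle_refl (n • x)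
  | succ m ih =>
      have step1 := rle_add ih (rle_refl (w₁ + k • x))
      have step2 := rle_add (rle_refl (m • w₂ : S)) h
      have e1 : (m+1) • w₁ + (n + (m+1) * k) • x
          = (m • w₁ + (n + m*k) • x) + (w₁ + k • x) := by
        have hnk : n + (m+1) * k = (n + m*k) + k := by ring
        simp only [hnk, succ_nsmul, add_nsmul]; abel
      have e2 : (m • w₂ + n • x) + (w₁ + k • x) = m • w₂ + (w₁ + (n + k) • x) := by
        simp only [add_nsmul]; abel
      have e3 : m • w₂ + (w₂ + n • x) = (m+1) • w₂ + n • x := by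
        simp only [succ_nsmul]; abel
      rw [e1, ← e3]
      exact rle_trans step1 (by rw [e2]; exact step2)

/-- Iteration lemma, "lower" form. -/
theorem iterDown {w₁ w₂ x : S} {n k : ℕ}
    (h : rle (w₁ + n • x) (w₂ + (n + k) • x)) (m : ℕ) :
    rle (m • w₁ + n • x) (m • w₂ + (n + m * k) • x) := by
  induction m with
  | zero => simpa using rle_refl (n • x)
  | succ m ih =>
      have step1 := rle_add (rle_refl (w₁ : S)) ih
      have step2 := rle_add h (rle_refl ((m • w₂ : S) + (m*k) • x))
      have e1 : (m+1) • w₁ + n • x = w₁ + (m • w₁ + n • x) := by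
        simp only [succ_nsmul]; abel
      have e2 : w₁ + (m • w₂ + (n + m * k) • x)
          = (w₁ + n • x) + (m • w₂ + (m*k) • x) := by
        simp only [add_nsmul]; abel
      have e3 : (w₂ + (n + k) • x) + (m • w₂ + (m*k) • x)
          = (m+1) • w₂ + (n + (m+1) * k) • x := by
        have hnk : n + (m+1) * k = (n + k) + m*k := by ring
        simp only [hnk, succ_nsmul, add_nsmul]; abel
      rw [e1, ← e3]
      exact rle_trans step1 (by rw [e2]; exact step2)

/-- Iteration lemma, "equal count" form. -/
theorem iterEq {A B x : S} {T : ℕ}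
    (h : rle (A + T • x) (B + T • x)) (q : ℕ) :
    rle (q • A + T • x) (q • B + T • x) := by
  induction q with
  | zero => simpa using rle_refl (T • x)
  | succ q ih =>
      have step1 := rle_add (rle_refl (A : S)) ih
      have step2 := rle_add (rle_refl (q • B : S)) h
      have e1 : (q+1) • A + T • x = A + (q • A + T • x) := by simp only [succ_nsmul]; abel
      have e2 : A + (q • B + T • x) = q • B + (A + T • x) := by abel
      have e3 : q • B + (B + T • x) = (q+1) • B + T • x := by simp only [succ_nsmul]; abel
      rw [e1, ← e3]
      exact rle_trans step1 (by rw [e2]; exact step2)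

/-- A partial state: a set of (element, value) pairs. -/
structure Good (θ : S) (G : Set (S × ℝ)) : Prop where
  zero_mem : ((0 : S), (0:ℝ)) ∈ G
  theta_mem : (θ, (1:ℝ)) ∈ G
  dom_le : ∀ p ∈ G, ∃ m : ℕ, rle p.1 (m • θ)
  add_mem : ∀ p ∈ G, ∀ q ∈ G, (p.1 + q.1, p.2 + q.2) ∈ G
  mono : ∀ p ∈ G, ∀ q ∈ G, rle p.1 q.1 → p.2 ≤ q.2

variable {θ : S} {G : Set (S × ℝ)}

theorem Good.nonneg (hG : Good θ G) {p : S × ℝ} (hp : p ∈ G) : 0 ≤ p.2 :=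
  hG.mono _ hG.zero_mem _ hp ⟨p.1, zero_add _⟩

theorem Good.smul_mem (hG : Good θ G) {p : S × ℝ} (hp : p ∈ G) (n : ℕ) :
    (n • p.1, (n : ℝ) * p.2) ∈ G := by
  induction n with
  | zero => simpa using hG.zero_mem
  | succ n ih =>
      have := hG.add_mem _ ih _ hp
      simpa [succ_nsmul, add_mul] using this

theorem Good.theta_smul_mem (hG : Good θ G) (n : ℕ) : ((n • θ : S), (n : ℝ)) ∈ G := by
  simpa using hG.smul_mem hG.theta_mem n

/-- The key cancellation lemma: if `A + Tx ≤ B + Tx` where `x ≤ M θ`, then the values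
satisfy `a ≤ b`. -/
theorem Good.cancel (hG : Good θ G) {x : S} {M : ℕ} (hx : rle x (M • θ))
    {A B : S} {a b : ℝ} (hA : (A, a) ∈ G) (hB : (B, b) ∈ G) {T : ℕ}
    (h : rle (A + T • x) (B + T • x)) : a ≤ b := by
  have key : ∀ q : ℕ, (q : ℝ) * a ≤ (q : ℝ) * b + (T * M : ℕ) := by
    intro q
    have h1 : rle (q • A) (q • B + (T * M) • θ) := by
      refine rle_trans (rle_self_add (q • A) (T • x)) (rle_trans (iterEq h q) ?_)
      have : rle (T • x) ((T * M) • θ) := by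
        have := rle_smul T hx
        rwa [← mul_nsmul'] at this
      exact rle_add (rle_refl _) this
    have hqA := hG.smul_mem hA q
    have hqB := hG.smul_mem hB q
    have hTM := hG.theta_smul_mem (T * M)
    have hsum := hG.add_mem _ hqB _ hTM
    have := hG.mono _ hqA _ hsum h1
    simpa using this
  by_contra hab
  push_neg at hab
  obtain ⟨q, hq⟩ := exists_nat_gt ((T * M : ℕ) / (a - b))
  have hq' := key q
  have hd : (0:ℝ) < a - b := by linarith
  have : ((T * M : ℕ) : ℝ) < q * (a - b) := by
    rw [div_lt_iff₀ hd] at hq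
    linarith [hq]
  push_cast at hq' this ⊢
  nlinarith


/-- One-step extension of a partial state to one more element of `D`. -/
theorem Good.extend (hG : Good θ G) {x : S} {M : ℕ} (hxM : rle x (M • θ))
    (hx : ∀ r : ℝ, (x, r) ∉ G) :
    ∃ G' : Set (S × ℝ), Good θ G' ∧ G ⊆ G' ∧ G ≠ G' := by
  classical
  -- the set of "upper bound" candidate values for the state at `x`
  set U : Set ℝ := {v | ∃ w₁ r₁ w₂ r₂ : _, ∃ n k : ℕ, (w₁, r₁) ∈ G ∧ (w₂, r₂) ∈ G ∧
      1 ≤ k ∧ rle (w₁ + (n + k) • x) (w₂ + n • x) ∧ v = (r₂ - r₁) / k} with hU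
  have hne : U.Nonempty := by
    refine ⟨(M : ℝ), 0, 0, M • θ, (M : ℝ), 0, 1, hG.zero_mem, hG.theta_smul_mem M, le_refl 1, ?_, by simp⟩
    simpa using hxM
  have hmem_nonneg : ∀ v ∈ U, (0:ℝ) ≤ v := by
    rintro v ⟨w₁, r₁, w₂, r₂, n, k, h₁, h₂, hk, hle, rfl⟩
    have hr : r₁ ≤ r₂ := by
      refine hG.cancel hxM h₁ h₂ (T := n) (rle_trans ?_ hle)
      have : rle (n • x) ((n + k) • x) := by
        simp only [add_nsmul]; exact rle_self_add _ _
      exact rle_add (rle_refl _) this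
    have hk' : (0:ℝ) < k := by exact_mod_cast hk
    exact div_nonneg (by linarith) hk'.le
  have hbdd : BddBelow U := ⟨0, fun v hv => hmem_nonneg v hv⟩
  set β : ℝ := sInf U with hβ
  have hβ0 : 0 ≤ β := le_csInf hne hmem_nonneg
  -- upper key inequality
  have keyUp : ∀ w₁ r₁ w₂ r₂ : _, ∀ n k : ℕ, (w₁, r₁) ∈ G → (w₂, r₂) ∈ G → 1 ≤ k →
      rle (w₁ + (n + k) • x) (w₂ + n • x) → r₁ + k * β ≤ r₂ := by
    intro w₁ r₁ w₂ r₂ n k h₁ h₂ hk hle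
    have hv : (r₂ - r₁) / k ∈ U := ⟨w₁, r₁, w₂, r₂, n, k, h₁, h₂, hk, hle, rfl⟩
    have hβle : β ≤ (r₂ - r₁) / k := csInf_le hbdd hv
    have hk' : (0:ℝ) < k := by exact_mod_cast hk
    rw [le_div_iff₀ hk'] at hβle
    nlinarith
  -- equal-count key inequality
  have keyEq : ∀ w₁ r₁ w₂ r₂ : _, ∀ n : ℕ, (w₁, r₁) ∈ G → (w₂, r₂) ∈ G →
      rle (w₁ + n • x) (w₂ + n • x) → r₁ ≤ r₂ := fun w₁ r₁ w₂ r₂ n h₁ h₂ hle =>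
    hG.cancel hxM h₁ h₂ hle
  -- lower key inequality
  have keyDown : ∀ w₁ r₁ w₂ r₂ : _, ∀ n k : ℕ, (w₁, r₁) ∈ G → (w₂, r₂) ∈ G → 1 ≤ k →
      rle (w₁ + n • x) (w₂ + (n + k) • x) → r₁ ≤ r₂ + k * β := by
    intro w₁ r₁ w₂ r₂ n k h₁ h₂ hk hle
    have hk0 : (0:ℝ) < k := by exact_mod_cast hk
    refine le_of_forall_pos_le_add ?_
    intro ε hε
    have hεk : 0 < ε / k := by positivity
    obtain ⟨u, hu, hult⟩ := (csInf_lt_iff hbdd hne).mp (by linarith : sInf U < β + ε / k)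
    obtain ⟨w₁', r₁', w₂', r₂', n', k', h₁', h₂', hk', hle', hueq⟩ := hu
    have hk'0 : (0:ℝ) < k' := by exact_mod_cast hk'
    -- combine the two constraints with multiplicities to equalize the `x`-counts
    have hA := iterDown hle k'
    have hB := iterUp hle' k
    have hsum := rle_add hA hB
    have hT1 : k' • w₁ + n • x + (k • w₁' + (n' + k * k') • x)
        = (k' • w₁ + k • w₁') + (n + n' + k * k') • x := by
      simp only [add_nsmul]; abel
    have hT2 : k' • w₂ + (n + k' * k) • x + (k • w₂' + n' • x)
        = (k' • w₂ + k • w₂') + (n + n' + k * k') • x := by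
      have : k' * k = k * k' := Nat.mul_comm _ _
      simp only [this, add_nsmul]; abel
    rw [hT1, hT2] at hsum
    have hp₁ := hG.add_mem _ (hG.smul_mem h₁ k') _ (hG.smul_mem h₁' k)
    have hp₂ := hG.add_mem _ (hG.smul_mem h₂ k') _ (hG.smul_mem h₂' k)
    have hval : (k' : ℝ) * r₁ + k * r₁' ≤ (k' : ℝ) * r₂ + k * r₂' :=
      hG.cancel hxM hp₁ hp₂ hsum
    have hku : r₂' - r₁' = k' * u := by rw [hueq]; field_simp
    have e : (k:ℝ) * (k' * u) = k' * (k * u) := by ring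
    have h5 : (k':ℝ) * (r₁ - r₂) ≤ k' * (k * u) := by rw [← e, ← hku]; linarith
    have h6 : r₁ - r₂ ≤ k * u := le_of_mul_le_mul_left (by linarith) hk'0
    have h7 : (k:ℝ) * (ε / k) = ε := by field_simp
    have h8 := mul_le_mul_of_nonneg_left hult.le hk0.le
    rw [mul_add, h7] at h8
    linarith
  -- the extended partial state
  refine ⟨{p | ∃ w r, ∃ n : ℕ, (w, r) ∈ G ∧ p = (w + n • x, r + n * β)}, ?_, ?_, ?_⟩
  · constructor
    · exact ⟨0, 0, 0, hG.zero_mem, by simp⟩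
    · exact ⟨θ, 1, 0, hG.theta_mem, by simp⟩
    · rintro p ⟨w, r, n, hw, rfl⟩
      obtain ⟨m, hm⟩ := hG.dom_le _ hw
      refine ⟨m + n * M, ?_⟩
      have hx' : rle (n • x) ((n * M) • θ) := by
        have := rle_smul n hxM
        rwa [← mul_nsmul'] at this
      have := rle_add hm hx'
      rwa [← add_nsmul] at this
    · rintro p ⟨w₁, r₁, n₁, hw₁, rfl⟩ q ⟨w₂, r₂, n₂, hw₂, rfl⟩
      refine ⟨w₁ + w₂, r₁ + r₂, n₁ + n₂, hG.add_mem _ hw₁ _ hw₂, ?_⟩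
      simp only [Prod.mk.injEq]
      constructor
      · simp only [add_nsmul]; abel
      · push_cast; ring
    · rintro p ⟨w₁, r₁, n₁, hw₁, rfl⟩ q ⟨w₂, r₂, n₂, hw₂, rfl⟩ hle
      simp only at hle ⊢
      rcases lt_trichotomy n₁ n₂ with hlt | heq | hgt
      · obtain ⟨k, rfl⟩ : ∃ k, n₂ = n₁ + k := ⟨n₂ - n₁, by omega⟩
        have hk : 1 ≤ k := by omega
        have := keyDown w₁ r₁ w₂ r₂ n₁ k hw₁ hw₂ hk hle
        push_cast; nlinarith [this, hβ0]
      · subst heq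
        have := keyEq w₁ r₁ w₂ r₂ n₁ hw₁ hw₂ hle
        linarith
      · obtain ⟨k, rfl⟩ : ∃ k, n₁ = n₂ + k := ⟨n₁ - n₂, by omega⟩
        have hk : 1 ≤ k := by omega
        have := keyUp w₁ r₁ w₂ r₂ n₂ k hw₁ hw₂ hk hle
        push_cast; nlinarith [this, hβ0]
  · intro p hp
    exact ⟨p.1, p.2, 0, hp, by simp⟩
  · intro hGG
    have : (x, β) ∈ G := by
      rw [hGG]
      exact ⟨0, 0, 1, hG.zero_mem, by simp⟩
    exact hx β this


/-- The base partial state, defined on multiples of `θ`. -/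
theorem good_base (θ : S) (H : ∀ n : ℕ, ¬ ∃ z, (n + 1) • θ + z = n • θ) :
    Good θ {p | ∃ n : ℕ, p = ((n • θ : S), (n : ℝ))} := by
  constructor
  · exact ⟨0, by simp⟩
  · exact ⟨1, by simp⟩
  · rintro p ⟨n, rfl⟩; exact ⟨n, rle_refl _⟩
  · rintro p ⟨n, rfl⟩ q ⟨m, rfl⟩
    exact ⟨n + m, by simp [Prod.mk.injEq, add_nsmul]⟩
  · rintro p ⟨n, rfl⟩ q ⟨m, rfl⟩ hle
    simp only
    by_contra hnm
    push_neg at hnm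
    have hmn : m + 1 ≤ n := by exact_mod_cast Nat.succ_le_of_lt (by exact_mod_cast hnm)
    have h1 : rle ((m + 1) • θ) (n • θ) :=
      ⟨(n - (m+1)) • θ, by rw [← add_nsmul]; congr 1; omega⟩
    exact H m (rle_trans h1 hle)

theorem exists_state (θ : S) (H : ∀ n : ℕ, ¬ ∃ z, (n + 1) • θ + z = n • θ) :
    ∃ ν : S → ℝ≥0∞, ν 0 = 0 ∧ (∀ x y, ν (x + y) = ν x + ν y) ∧
      (∀ x y : S, (∃ z, x + z = y) → ν x ≤ ν y) ∧
      (∃ x, ν x ≠ 0 ∧ ν x ≠ ∞) ∧ ν θ = 1 := by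
  classical
  -- Zorn's lemma
  obtain ⟨Gmax, -, hmax⟩ := zorn_subset_nonempty {G : Set (S × ℝ) | Good θ G}
    (fun c hc hchain hcne => by
      refine ⟨⋃₀ c, ?_, fun s hs => Set.subset_sUnion_of_mem hs⟩
      obtain ⟨G₁, hG₁⟩ := hcne
      constructor
      · exact ⟨G₁, hG₁, (hc hG₁).zero_mem⟩
      · exact ⟨G₁, hG₁, (hc hG₁).theta_mem⟩
      · rintro p ⟨G, hGc, hp⟩; exact (hc hGc).dom_le _ hp
      · rintro p ⟨Ga, hGa, hp⟩ q ⟨Gb, hGb, hq⟩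
        rcases hchain.total hGa hGb with hab | hba
        · exact ⟨Gb, hGb, (hc hGb).add_mem _ (hab hp) _ hq⟩
        · exact ⟨Ga, hGa, (hc hGa).add_mem _ hp _ (hba hq)⟩
      · rintro p ⟨Ga, hGa, hp⟩ q ⟨Gb, hGb, hq⟩ hle
        rcases hchain.total hGa hGb with hab | hba
        · exact (hc hGb).mono _ (hab hp) _ hq hle
        · exact (hc hGa).mono _ hp _ (hba hq) hle)
    _ (good_base θ H)
  have hGm : Good θ Gmax := hmax.prop
  -- the domain of the maximal partial state is all of `D`
  have hdom : ∀ s : S, (∃ m : ℕ, rle s (m • θ)) → ∃ r : ℝ, (s, r) ∈ Gmax := by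
    intro s hs
    by_contra hx
    push_neg at hx
    obtain ⟨M, hM⟩ := hs
    obtain ⟨G', hG', hsub', hne'⟩ := hGm.extend hM (fun r => hx r)
    exact hne' (subset_antisymm hsub' (hmax.2 hG' hsub'))
  have huniq : ∀ (s : S) (r r' : ℝ), (s, r) ∈ Gmax → (s, r') ∈ Gmax → r = r' :=
    fun s r r' h h' =>
      le_antisymm (hGm.mono _ h _ h' (rle_refl s)) (hGm.mono _ h' _ h (rle_refl s))
  set ν : S → ℝ≥0∞ := fun s =>
    if h : ∃ r : ℝ, (s, r) ∈ Gmax then ENNReal.ofReal h.choose else ∞ with hν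
  have hν_spec : ∀ (s : S) (r : ℝ), (s, r) ∈ Gmax → ν s = ENNReal.ofReal r := by
    intro s r h
    have hex : ∃ r : ℝ, (s, r) ∈ Gmax := ⟨r, h⟩
    simp only [hν, dif_pos hex]
    rw [huniq s hex.choose r hex.choose_spec h]
  have hν_top : ∀ s : S, (∀ r : ℝ, (s, r) ∉ Gmax) → ν s = ∞ := by
    intro s h
    simp only [hν]
    rw [dif_neg]
    push_neg
    exact h
  have hdom' : ∀ s : S, (∃ r : ℝ, (s, r) ∈ Gmax) ↔ ∃ m : ℕ, rle s (m • θ) := by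
    intro s
    exact ⟨fun ⟨r, hr⟩ => hGm.dom_le _ hr, hdom s⟩
  refine ⟨ν, ?_, ?_, ?_, ?_, ?_⟩
  · rw [hν_spec 0 0 hGm.zero_mem]; simp
  · intro a b
    by_cases ha : ∃ r : ℝ, (a, r) ∈ Gmax
    · by_cases hb : ∃ r : ℝ, (b, r) ∈ Gmax
      · obtain ⟨ra, hra⟩ := ha
        obtain ⟨rb, hrb⟩ := hb
        have hab := hGm.add_mem _ hra _ hrb
        rw [hν_spec _ _ hra, hν_spec _ _ hrb, hν_spec _ _ hab]
        exact ENNReal.ofReal_add (hGm.nonneg hra) (hGm.nonneg hrb)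
      · have hab : ∀ r : ℝ, (a + b, r) ∉ Gmax := by
          intro r hr
          obtain ⟨m, hm⟩ := hGm.dom_le _ hr
          exact hb (hdom b ⟨m, rle_trans ⟨a, by rw [add_comm]⟩ hm⟩)
        push_neg at hb
        rw [hν_top _ hab, hν_top _ hb]; simp
    · have hab : ∀ r : ℝ, (a + b, r) ∉ Gmax := by
        intro r hr
        obtain ⟨m, hm⟩ := hGm.dom_le _ hr
        exact ha (hdom a ⟨m, rle_trans ⟨b, rfl⟩ hm⟩)
      push_neg at ha
      rw [hν_top _ hab, hν_top _ ha]; simp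
  · intro a b hle
    by_cases hb : ∃ r : ℝ, (b, r) ∈ Gmax
    · obtain ⟨rb, hrb⟩ := hb
      obtain ⟨m, hm⟩ := hGm.dom_le _ hrb
      obtain ⟨ra, hra⟩ := hdom a ⟨m, rle_trans hle hm⟩
      rw [hν_spec _ _ hra, hν_spec _ _ hrb]
      exact ENNReal.ofReal_le_ofReal (hGm.mono _ hra _ hrb hle)
    · push_neg at hb
      rw [hν_top _ hb]
      exact le_top
  · refine ⟨θ, ?_, ?_⟩ <;> rw [hν_spec θ 1 hGm.theta_mem] <;> simp
  · rw [hν_spec θ 1 hGm.theta_mem]; exact ENNReal.ofReal_one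

end TarskiAux

/-- **Statement 12 (Tarski).** Let `(S, +)` be an abelian monoid equipped with the
algebraic ordering (`x ≤ y` iff `x + z = y` for some `z`) and let `θ ∈ S`.  The
following are equivalent: (i) `(n+1)θ ≰ nθ` for all `n ∈ ℕ` (`θ` is completely
non-paradoxical); (ii) there is a non-trivial state `ν : S → [0, ∞]` with `ν(θ) = 1`. -/
theorem tarski_state_iff_completelyNonParadoxical {S : Type*} [AddCommMonoid S] (θ : S) :
    (∀ n : ℕ, ¬ ∃ z, (n + 1) • θ + z = n • θ) ↔
      ∃ ν : S → ℝ≥0∞, ν 0 = 0 ∧ (∀ x y, ν (x + y) = ν x + ν y) ∧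
        (∀ x y : S, (∃ z, x + z = y) → ν x ≤ ν y) ∧
        (∃ x, ν x ≠ 0 ∧ ν x ≠ ∞) ∧ ν θ = 1 := by
  constructor
  · exact TarskiAux.exists_state θ
  · rintro ⟨ν, hν0, hadd, hmono, -, hνθ⟩ n ⟨z, hz⟩
    have hsmul : ∀ k : ℕ, ν (k • θ) = (k : ℝ≥0∞) := by
      intro k
      induction k with
      | zero => simpa using hν0
      | succ k ih => rw [succ_nsmul, hadd, ih, hνθ]; push_cast; ring
    have h1 : ν ((n + 1) • θ + z) = ν (n • θ) := by rw [hz]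
    rw [hadd, hsmul, hsmul] at h1
    have h2 : ((n : ℝ≥0∞) + 1) ≤ (n : ℝ≥0∞) := by
      push_cast at h1
      calc ((n : ℝ≥0∞) + 1) ≤ (n : ℝ≥0∞) + 1 + ν z := le_self_add
        _ = (n : ℝ≥0∞) := h1
    have h3 : (n : ℝ≥0∞) < (n : ℝ≥0∞) + 1 :=
      ENNReal.lt_add_right (ENNReal.natCast_ne_top n) one_ne_zero
    exact absurd h2 h3.not_ge
end

section
/- Let G be a locally compact, Hausdorff, second-countable ample étale groupoid with compact unit space G⁰ having no isolated points. If G has the n-filling property for some n ∈ ℕ, then G is minimal and every nonempty compact open subset A ⊆ G⁰ is properly paradoxical, i.e., (2,1)-paradoxical. -/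
open Set

namespace EtaleGroupoid

variable {G : Type*} [TopologicalSpace G] (𝒢 : EtaleGroupoid G)

/-- `G` has the `n`-filling property: for all nonempty open `U₁, …, Uₙ ⊆ G⁰` there are
compact open bisections `E₁, …, Eₙ` with `⋃ⱼ r(EⱼUⱼ) = G⁰`. -/
def NFilling (n : ℕ) : Prop :=
  ∀ U : Fin n → Set G, (∀ j, 𝒢.IsUnitOpen (U j) ∧ (U j).Nonempty) →
    ∃ E : Fin n → Set G, (∀ j, 𝒢.IsCompactOpenBisection (E j)) ∧
      (⋃ j, 𝒢.ranOn (E j) (U j)) = 𝒢.unitSpace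

/-- `G` is `n`-filling in Suzuki's sense: for every nonempty open `W ⊆ G⁰` there are
open bisections `E₁, …, Eₙ` with `⋃ᵢ r(EᵢW) = G⁰`. -/
def SuzukiNFilling (n : ℕ) : Prop :=
  ∀ W : Set G, 𝒢.IsUnitOpen W → W.Nonempty →
    ∃ E : Fin n → Set G, (∀ j, 𝒢.IsOpenBisection (E j)) ∧
      (⋃ j, 𝒢.ranOn (E j) W) = 𝒢.unitSpace

end EtaleGroupoid

namespace EtaleGroupoid

variable {G : Type*} [TopologicalSpace G] (𝒢 : EtaleGroupoid G)

lemma isClosed_unitSpace' [T2Space G] : IsClosed 𝒢.unitSpace := by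
  have h : 𝒢.unitSpace = {α | 𝒢.r α = α} := by
    apply Set.eq_of_subset_of_subset
    · intro u hu; exact 𝒢.r_unit u hu
    · intro α hα
      have h2 : 𝒢.r α ∈ 𝒢.unitSpace := 𝒢.r_mem α
      rwa [hα] at h2
  rw [h]; exact isClosed_eq 𝒢.continuous_r' continuous_id

lemma inv_inv' (α : G) : 𝒢.inv (𝒢.inv α) = α := by
  have h1 : 𝒢.s α = 𝒢.r (𝒢.inv α) := (𝒢.r_inv α).symm
  have h2 : 𝒢.s (𝒢.inv α) = 𝒢.r (𝒢.inv (𝒢.inv α)) := (𝒢.r_inv (𝒢.inv α)).symm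
  calc 𝒢.inv (𝒢.inv α)
      = 𝒢.mul (𝒢.r (𝒢.inv (𝒢.inv α))) (𝒢.inv (𝒢.inv α)) := (𝒢.unit_mul _).symm
    _ = 𝒢.mul (𝒢.mul α (𝒢.inv α)) (𝒢.inv (𝒢.inv α)) := by
        rw [𝒢.r_inv (𝒢.inv α), 𝒢.s_inv α, ← 𝒢.mul_inv α]
    _ = 𝒢.mul α (𝒢.mul (𝒢.inv α) (𝒢.inv (𝒢.inv α))) := 𝒢.mul_assoc' _ _ _ h1 h2
    _ = 𝒢.mul α (𝒢.r (𝒢.inv α)) := by rw [𝒢.mul_inv]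
    _ = 𝒢.mul α (𝒢.s α) := by rw [𝒢.r_inv]
    _ = α := 𝒢.mul_unit α

lemma inv_image_eq_preimage (S : Set G) : 𝒢.inv '' S = 𝒢.inv ⁻¹' S := by
  ext x
  constructor
  · rintro ⟨y, hy, rfl⟩
    simpa [𝒢.inv_inv'] using hy
  · intro hx
    exact ⟨𝒢.inv x, hx, 𝒢.inv_inv' x⟩

lemma s_image_inv (S : Set G) : 𝒢.s '' (𝒢.inv '' S) = 𝒢.r '' S := by
  rw [Set.image_image]
  exact Set.image_congr fun α _ => 𝒢.s_inv α

lemma r_image_inv (S : Set G) : 𝒢.r '' (𝒢.inv '' S) = 𝒢.s '' S := by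
  rw [Set.image_image]
  exact Set.image_congr fun α _ => 𝒢.r_inv α

lemma inv_image_cob {E : Set G} (hE : 𝒢.IsCompactOpenBisection E) :
    𝒢.IsCompactOpenBisection (𝒢.inv '' E) := by
  refine ⟨hE.1.image 𝒢.continuous_inv, ?_, ?_, ?_⟩
  · rw [𝒢.inv_image_eq_preimage]
    exact hE.2.1.preimage 𝒢.continuous_inv
  · rintro a ⟨a', ha', rfl⟩ b ⟨b', hb', rfl⟩ hab
    rw [𝒢.r_inv, 𝒢.r_inv] at hab
    rw [hE.2.2.2 ha' hb' hab]
  · rintro a ⟨a', ha', rfl⟩ b ⟨b', hb', rfl⟩ hab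
    rw [𝒢.s_inv, 𝒢.s_inv] at hab
    rw [hE.2.2.1 ha' hb' hab]

lemma restrict_cob [T2Space G] {E W Vc : Set G} (hE : 𝒢.IsCompactOpenBisection E)
    (hVW : Vc = W ∩ 𝒢.unitSpace) (hW : IsOpen W) (hVc : IsCompact Vc) :
    𝒢.IsCompactOpenBisection {α ∈ E | 𝒢.s α ∈ Vc} := by
  have h1 : {α ∈ E | 𝒢.s α ∈ Vc} = E ∩ 𝒢.s ⁻¹' Vc := rfl
  have h2 : {α ∈ E | 𝒢.s α ∈ Vc} = E ∩ 𝒢.s ⁻¹' W := by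
    ext α
    simp only [Set.mem_setOf_eq, Set.mem_inter_iff, Set.mem_preimage, hVW, 𝒢.s_mem α,
      and_true]
  refine ⟨?_, ?_, ?_, ?_⟩
  · rw [h1]; exact hE.1.inter_right (hVc.isClosed.preimage 𝒢.continuous_s')
  · rw [h2]; exact hE.2.1.inter (hW.preimage 𝒢.continuous_s')
  · exact hE.2.2.1.mono (Set.sep_subset _ _)
  · exact hE.2.2.2.mono (Set.sep_subset _ _)

lemma exists_two' [T2Space G] (hample : 𝒢.Ample)
    (hnoiso : ∀ u ∈ 𝒢.unitSpace, u ∈ closure (𝒢.unitSpace \ {u}))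
    (A : Set G) (hA : 𝒢.IsUnitOpen A) (hAne : A.Nonempty) :
    ∃ V V' : Set G,
      (𝒢.IsUnitOpen V ∧ IsCompact V ∧ V.Nonempty ∧ V ⊆ A) ∧
      (𝒢.IsUnitOpen V' ∧ IsCompact V' ∧ V'.Nonempty ∧ V' ⊆ A) ∧
      Disjoint V V' := by
  obtain ⟨hsub, O, hO, hAO⟩ := hA
  obtain ⟨u, hu⟩ := hAne
  have huU : u ∈ 𝒢.unitSpace := hsub hu
  have huO : u ∈ O := by rw [hAO] at hu; exact hu.1
  have hcl := hnoiso u huU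
  obtain ⟨u', hu'O, hu'⟩ : (O ∩ (𝒢.unitSpace \ {u})).Nonempty :=
    mem_closure_iff.mp hcl O hO huO
  have hne : u ≠ u' := fun h => hu'.2 (by simp [h])
  obtain ⟨O₁, O₂, h1, h2, hu1, hu2, hdisj⟩ := t2_separation hne
  obtain ⟨E₁, hE₁, huE₁, hE₁sub⟩ := hample u (O ∩ O₁) (hO.inter h1) ⟨huO, hu1⟩
  obtain ⟨E₂, hE₂, huE₂, hE₂sub⟩ := hample u' (O ∩ O₂) (hO.inter h2) ⟨hu'O, hu2⟩
  refine ⟨E₁ ∩ 𝒢.unitSpace, E₂ ∩ 𝒢.unitSpace,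
    ⟨⟨Set.inter_subset_right, E₁, hE₁.2.1, rfl⟩,
      hE₁.1.inter_right 𝒢.isClosed_unitSpace', ⟨u, huE₁, huU⟩, ?_⟩,
    ⟨⟨Set.inter_subset_right, E₂, hE₂.2.1, rfl⟩,
      hE₂.1.inter_right 𝒢.isClosed_unitSpace', ⟨u', huE₂, hu'.1⟩, ?_⟩, ?_⟩
  · rw [hAO]
    exact Set.inter_subset_inter_left _ (hE₁sub.trans Set.inter_subset_left)
  · rw [hAO]
    exact Set.inter_subset_inter_left _ (hE₂sub.trans Set.inter_subset_left)
  · exact hdisj.mono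
      (Set.inter_subset_left.trans (hE₁sub.trans Set.inter_subset_right))
      (Set.inter_subset_left.trans (hE₂sub.trans Set.inter_subset_right))

lemma exists_family' [T2Space G] (hample : 𝒢.Ample)
    (hnoiso : ∀ u ∈ 𝒢.unitSpace, u ∈ closure (𝒢.unitSpace \ {u}))
    (k : ℕ) (A : Set G) (hA : 𝒢.IsUnitOpen A) (hAne : A.Nonempty) :
    ∃ V : Fin k → Set G,
      (∀ i, 𝒢.IsUnitOpen (V i) ∧ IsCompact (V i) ∧ (V i).Nonempty ∧ V i ⊆ A) ∧
      ∀ i j, i ≠ j → Disjoint (V i) (V j) := by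
  induction k generalizing A with
  | zero => exact ⟨fun i => i.elim0, fun i => i.elim0, fun i => i.elim0⟩
  | succ k ih =>
    obtain ⟨V0, V1, hV0, hV1, hdisj⟩ := 𝒢.exists_two' hample hnoiso A hA hAne
    obtain ⟨W, hW, hWdisj⟩ := ih V1 hV1.1 hV1.2.2.1
    refine ⟨Fin.cons V0 W, ?_, ?_⟩
    · intro i
      refine Fin.cases ?_ ?_ i
      · simpa using hV0
      · intro j
        simp only [Fin.cons_succ]
        exact ⟨(hW j).1, (hW j).2.1, (hW j).2.2.1, (hW j).2.2.2.trans hV1.2.2.2⟩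
    · intro i j
      refine Fin.cases ?_ ?_ i
      · refine Fin.cases ?_ ?_ j
        · intro h; exact absurd rfl h
        · intro j' _
          simp only [Fin.cons_zero, Fin.cons_succ]
          exact hdisj.mono_right (hW j').2.2.2
      · intro i'
        refine Fin.cases ?_ ?_ j
        · intro _
          simp only [Fin.cons_zero, Fin.cons_succ]
          exact (hdisj.mono_right (hW i').2.2.2).symm
        · intro j' hne'
          simp only [Fin.cons_succ]
          exact hWdisj i' j' fun h => hne' (by rw [h])


lemma sum_map_ofFn_apply {k : ℕ} (g : Set G → G → ℤ) (F : Fin k → Set G) (x : G) :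
    ((List.ofFn F).map g).sum x = ∑ j, g (F j) x := by
  rw [List.map_ofFn, List.sum_ofFn, Finset.sum_apply]
  rfl

end EtaleGroupoid
/-- **Statement 15.** Let `G` be an ample étale groupoid with compact unit space having
no isolated points.  If `G` has the `n`-filling property for some `n`, then `G` is
minimal and every nonempty compact open `A ⊆ G⁰` is properly paradoxical
(`(2, 1)`-paradoxical). -/
theorem nFilling_minimal_and_paradoxical {G : Type*} [TopologicalSpace G]
    [LocallyCompactSpace G] [T2Space G] [SecondCountableTopology G]
    (𝒢 : EtaleGroupoid G) (hample : 𝒢.Ample) (hcompact : IsCompact 𝒢.unitSpace)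
    (hnoiso : ∀ u ∈ 𝒢.unitSpace, u ∈ closure (𝒢.unitSpace \ {u}))
    (n : ℕ) (hfill : 𝒢.NFilling n) :
    𝒢.Minimal ∧
      ∀ A : Set G, 𝒢.IsUnitOpen A → IsCompact A → A.Nonempty →
        𝒢.IsParadoxical A 2 1 := by
  constructor
  · -- minimality
    intro u hu v hv
    rw [mem_closure_iff]
    intro o ho hvo
    obtain ⟨E, hE, heq⟩ := hfill (fun _ => o ∩ 𝒢.unitSpace)
      (fun j => ⟨⟨Set.inter_subset_right, o, ho, rfl⟩, ⟨v, hvo, hv⟩⟩)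
    have hu' : u ∈ ⋃ j, 𝒢.ranOn (E j) (o ∩ 𝒢.unitSpace) := by rw [heq]; exact hu
    obtain ⟨j, hj⟩ := Set.mem_iUnion.mp hu'
    obtain ⟨α, ⟨hαE, hsα⟩, hrα⟩ := hj
    refine ⟨𝒢.s α, hsα.1, 𝒢.inv α, ?_, 𝒢.r_inv α⟩
    simp only [Set.mem_setOf_eq, 𝒢.s_inv, hrα]
  · -- paradoxicality
    intro A hA hAcomp hAne
    obtain ⟨V, hV, hVdisj⟩ := 𝒢.exists_family' hample hnoiso (n + n) A hA hAne
    obtain ⟨E, hE, heq⟩ := hfill (fun j => V (Fin.castAdd n j))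
      (fun j => ⟨(hV _).1, (hV _).2.2.1⟩)
    obtain ⟨E', hE', heq'⟩ := hfill (fun j => V (Fin.natAdd n j))
      (fun j => ⟨(hV _).1, (hV _).2.2.1⟩)
    set S : Fin (n + n) → Set G := fun i =>
      Fin.addCases (fun j => {α ∈ E j | 𝒢.s α ∈ V (Fin.castAdd n j)})
        (fun j => {α ∈ E' j | 𝒢.s α ∈ V (Fin.natAdd n j)}) i with hS
    set F : Fin (n + n) → Set G := fun i => 𝒢.inv '' S i with hF
    have hScob : ∀ i, 𝒢.IsCompactOpenBisection (S i) := by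
      have key : ∀ (E₀ : Set G), 𝒢.IsCompactOpenBisection E₀ → ∀ i : Fin (n + n),
          𝒢.IsCompactOpenBisection {α ∈ E₀ | 𝒢.s α ∈ V i} := by
        intro E₀ hE₀ i
        obtain ⟨hsub, W, hW, hVW⟩ := (hV i).1
        exact 𝒢.restrict_cob hE₀ hVW hW (hV i).2.1
      intro i
      refine Fin.addCases (motive := fun i => 𝒢.IsCompactOpenBisection (S i)) ?_ ?_ i
      · intro j
        simpa only [hS, Fin.addCases_left] using key (E j) (hE j) (Fin.castAdd n j)
      · intro j
        simpa only [hS, Fin.addCases_right] using key (E' j) (hE' j) (Fin.natAdd n j)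
    have hFcob : ∀ i, 𝒢.IsCompactOpenBisection (F i) := fun i => 𝒢.inv_image_cob (hScob i)
    have hsrc : ∀ i, 𝒢.s '' F i = 𝒢.r '' S i := fun i => 𝒢.s_image_inv (S i)
    have hran : ∀ i, 𝒢.r '' F i ⊆ V i := by
      intro i
      rw [hF, 𝒢.r_image_inv (S i)]
      refine Fin.addCases (motive := fun i => 𝒢.s '' S i ⊆ V i) ?_ ?_ i
      · intro j
        simp only [hS, Fin.addCases_left]
        rintro x ⟨α, ⟨-, hα⟩, rfl⟩; exact hα
      · intro j
        simp only [hS, Fin.addCases_right]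
        rintro x ⟨α, ⟨-, hα⟩, rfl⟩; exact hα
    refine ⟨List.ofFn F, ?_, ?_, ?_⟩
    · intro E₀ hE₀
      rw [List.mem_ofFn] at hE₀
      obtain ⟨i, rfl⟩ := hE₀
      exact hFcob i
    · -- 2 • 1_A ≤ Σ 1_{s(F i)}
      intro x
      have hsum : ((List.ofFn F).map 𝒢.srcInd).sum x = ∑ i, 𝒢.srcInd (F i) x :=
        EtaleGroupoid.sum_map_ofFn_apply _ F x
      rw [hsum]
      by_cases hx : x ∈ A
      · have hx0 : x ∈ 𝒢.unitSpace := hA.1 hx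
        have hx1 : x ∈ ⋃ j, 𝒢.ranOn (E j) (V (Fin.castAdd n j)) := by rw [heq]; exact hx0
        have hx2 : x ∈ ⋃ j, 𝒢.ranOn (E' j) (V (Fin.natAdd n j)) := by rw [heq']; exact hx0
        obtain ⟨j₁, hj₁⟩ := Set.mem_iUnion.mp hx1
        obtain ⟨j₂, hj₂⟩ := Set.mem_iUnion.mp hx2
        have hm1 : x ∈ 𝒢.s '' F (Fin.castAdd n j₁) := by
          rw [hsrc]
          simpa only [hS, Fin.addCases_left, EtaleGroupoid.ranOn] using hj₁
        have hm2 : x ∈ 𝒢.s '' F (Fin.natAdd n j₂) := by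
          rw [hsrc]
          simpa only [hS, Fin.addCases_right, EtaleGroupoid.ranOn] using hj₂
        have hge : ∀ i, (0 : ℤ) ≤ 𝒢.srcInd (F i) x :=
          fun i => Set.indicator_nonneg (fun _ _ => zero_le_one) x
        have e1 : 𝒢.srcInd (F (Fin.castAdd n j₁)) x = 1 := by
          unfold EtaleGroupoid.srcInd
          rw [Set.indicator_of_mem hm1]; rfl
        have e2 : 𝒢.srcInd (F (Fin.natAdd n j₂)) x = 1 := by
          unfold EtaleGroupoid.srcInd
          rw [Set.indicator_of_mem hm2]; rfl
        have hsplit : ∑ i, 𝒢.srcInd (F i) x =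
            ∑ j : Fin n, 𝒢.srcInd (F (Fin.castAdd n j)) x +
              ∑ j : Fin n, 𝒢.srcInd (F (Fin.natAdd n j)) x :=
          Fin.sum_univ_add _
        have b1 : (1 : ℤ) ≤ ∑ j : Fin n, 𝒢.srcInd (F (Fin.castAdd n j)) x :=
          e1 ▸ Finset.single_le_sum (fun j _ => hge _) (Finset.mem_univ j₁)
        have b2 : (1 : ℤ) ≤ ∑ j : Fin n, 𝒢.srcInd (F (Fin.natAdd n j)) x :=
          e2 ▸ Finset.single_le_sum (fun j _ => hge _) (Finset.mem_univ j₂)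
        have hlhs : (2 • Set.indicator A (1 : G → ℤ)) x = 2 := by
          simp [Set.indicator_of_mem hx]
        rw [hlhs, hsplit]
        linarith
      · have hlhs : (2 • Set.indicator A (1 : G → ℤ)) x = 0 := by
          simp [Set.indicator_of_notMem hx]
        rw [hlhs]
        exact Finset.sum_nonneg fun i _ => Set.indicator_nonneg (fun _ _ => zero_le_one) x
    · -- Σ 1_{r(F i)} ≤ 1 • 1_A
      intro x
      have hsum : ((List.ofFn F).map 𝒢.ranInd).sum x = ∑ i, 𝒢.ranInd (F i) x :=
        EtaleGroupoid.sum_map_ofFn_apply _ F x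
      have hrhs : (1 • Set.indicator A (1 : G → ℤ)) x = Set.indicator A 1 x := by simp
      rw [hsum, hrhs]
      by_cases hex : ∃ i, x ∈ 𝒢.r '' F i
      · obtain ⟨i₀, hi₀⟩ := hex
        have hxV : x ∈ V i₀ := hran i₀ hi₀
        have hxA : x ∈ A := (hV i₀).2.2.2 hxV
        have hone : ∑ i, 𝒢.ranInd (F i) x = 𝒢.ranInd (F i₀) x := by
          refine Finset.sum_eq_single i₀ ?_ (fun h => absurd (Finset.mem_univ i₀) h)
          intro i _ hi
          have hni : x ∉ 𝒢.r '' F i := fun hxi =>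
            Set.disjoint_left.mp (hVdisj i i₀ hi) (hran i hxi) hxV
          unfold EtaleGroupoid.ranInd
          rw [Set.indicator_of_notMem hni]
        rw [hone]
        have : 𝒢.ranInd (F i₀) x = 1 := by
          unfold EtaleGroupoid.ranInd
          rw [Set.indicator_of_mem hi₀]; rfl
        rw [this]
        simp [Set.indicator_of_mem hxA]
      · push_neg at hex
        have hzero : ∑ i, 𝒢.ranInd (F i) x = 0 :=
          Finset.sum_eq_zero fun i _ => by
            unfold EtaleGroupoid.ranInd
            rw [Set.indicator_of_notMem (hex i)]
        rw [hzero]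
        exact Set.indicator_nonneg (fun _ _ => zero_le_one) x
end

section
/- Let E = (E⁰, E¹, r, s) be a topological graph with E⁰ totally disconnected and with r proper and surjective. Then the relations ∼ and ≈ on C_c(E⁰, ℤ)⁺ are equivalence relations. -/
/-!
Since `Θᵐ ∘ Θⁿ = Θ^(m+n)`, `∼` is an equivalence relation, and reflexivity and symmetry of `≈`
are immediate. Transitivity of `≈` needs two facts. First, `Θ` maps `C_c(E⁰, ℤ)⁺` to itself and
is additive there: because `s` is a local homeomorphism and `r` is proper, near each vertex
`Θ¹ f` is a finite sum of `f ∘ r` composed with continuous local sections of `s`. Second, the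
lattice-ordered group `C_c(E⁰, ℤ)` has the Riesz refinement property. Given witnesses `(fᵢ, gᵢ)`
of `f ≈ g` and `(g'ⱼ, hⱼ)` of `g ≈ h`, the relation `Σ gᵢ ∼ Σ g'ⱼ` reads
`Σ Θᵖ gᵢ = Σ Θ^q g'ⱼ`, which refines into pieces `zᵢⱼ`; after moving all exponents to a common
one, the pairs `(Θ^(Sᵢ) zᵢⱼ, Θ^(Tⱼ) zᵢⱼ)` witness `f ≈ h`.
-/

open Set

/-- A topological graph `E = (E⁰, E¹, r, s)`: a continuous range map and a source map
that is a local homeomorphism, between locally compact Hausdorff spaces. -/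
structure TopGraph (V E : Type*) [TopologicalSpace V] [TopologicalSpace E] where
  r : E → V
  s : E → V
  continuous_r : Continuous r
  isLocalHomeomorph_s : IsLocalHomeomorph s

/-- `C_c(E⁰, ℤ)⁺`: compactly supported continuous functions `E⁰ → ℤ` with nonnegative
values. -/
def CcPosV (V : Type*) [TopologicalSpace V] : Set (V → ℤ) :=
  {f | Continuous f ∧ HasCompactSupport f ∧ ∀ v, 0 ≤ f v}

namespace TopGraph

variable {V E : Type*} [TopologicalSpace V] [TopologicalSpace E] (gr : TopGraph V E)

/-- `Θ¹(f)(v) = Σ_{e ∈ E¹, s(e) = v} f(r(e))` (a finite sum when `r` is proper and `f`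
is compactly supported). -/
noncomputable def theta1 (f : V → ℤ) : V → ℤ :=
  fun v => ∑ᶠ e ∈ {e : E | gr.s e = v}, f (gr.r e)

/-- `Θⁿ = (Θ¹)ⁿ`, so that `Θⁿ(f)(v) = Σ_{λ ∈ Eⁿ, s(λ) = v} f(r(λ))`. -/
noncomputable def theta (n : ℕ) (f : V → ℤ) : V → ℤ := (theta1 gr)^[n] f


/-- `f ∼ g` iff `Θᵖ(f) = Θ^q(g)` for some `p, q ∈ ℕ`. -/
def Sim (f g : V → ℤ) : Prop := ∃ p q : ℕ, gr.theta p f = gr.theta q g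

/-- `f ≈ g` iff there are finitely many pairs `(fᵢ, gᵢ)` in `C_c(E⁰,ℤ)⁺ × C_c(E⁰,ℤ)⁺`
with `f ∼ Σᵢ fᵢ`, `g ∼ Σᵢ gᵢ`, and `fᵢ ∼ gᵢ` for all `i`. -/
def Approx (f g : V → ℤ) : Prop :=
  ∃ L : List ((V → ℤ) × (V → ℤ)),
    (∀ p ∈ L, p.1 ∈ CcPosV V ∧ p.2 ∈ CcPosV V) ∧
    gr.Sim f (L.map Prod.fst).sum ∧ gr.Sim g (L.map Prod.snd).sum ∧
    ∀ p ∈ L, gr.Sim p.1 p.2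

end TopGraph

open Filter Topology Finset

theorem HasCompactSupport.comp_isProperMap {X Y M : Type*} [TopologicalSpace X]
    [TopologicalSpace Y] [Zero M] {f : Y → M} {g : X → Y} (hf : HasCompactSupport f)
    (hg : IsProperMap g) : HasCompactSupport (f ∘ g) :=
  (hg.isCompact_preimage hf).of_isClosed_subset (isClosed_tsupport _)
    (tsupport_comp_subset_preimage f hg.continuous)

section FiberSum

variable {X Y M : Type*} [TopologicalSpace X] [TopologicalSpace Y] {p : X → Y}

theorem IsLocalHomeomorph.finite_preimage_singleton_inter [T1Space Y]
    (hp : IsLocalHomeomorph p) {K : Set X} (hK : IsCompact K) (y : Y) :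
    (p ⁻¹' {y} ∩ K).Finite := by
  refine (hK.inter_left (isClosed_singleton.preimage hp.continuous)).finite ?_
  refine hp.isLocalHomeomorphOn.isDiscrete_of_image (Set.Subsingleton.isDiscrete ?_)
  exact subsingleton_singleton.anti (by rintro _ ⟨x, hx, rfl⟩; exact hx.1)

theorem IsLocalHomeomorph.exists_local_sections [T2Space X] [T2Space Y]
    (hp : IsLocalHomeomorph p) {K : Set X} (hK : IsCompact K) (y₀ : Y) :
    ∃ (T : Finset X) (σ : X → Y → X), (∀ x ∈ T, ContinuousAt (σ x) y₀) ∧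
      ∀ᶠ y in 𝓝 y₀, (∀ x ∈ T, p (σ x y) = y) ∧ InjOn (σ · y) T ∧
        p ⁻¹' {y} ∩ K ⊆ (σ · y) '' T := by
  have hfin := hp.finite_preimage_singleton_inter hK y₀
  obtain ⟨U, hU, hUdisj⟩ := hfin.t2_separation
  have hpc := hp.continuous
  choose e he hpe using hp
  let c x := (e x).restrOpen (U x) (hU x).2
  have hc : ∀ x, ⇑(c x) = p := fun x => (hpe x).symm
  have hxc : ∀ x, x ∈ (c x).source := fun x => ⟨he x, (hU x).1⟩
  have hT : ∀ x ∈ hfin.toFinset, y₀ ∈ (c x).target := fun x hx => by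
    have hpx : p x = y₀ := (hfin.mem_toFinset.1 hx).1
    rw [← hpx, ← hc x]
    exact (c x).map_source (hxc x)
  refine ⟨hfin.toFinset, fun x => (c x).symm, fun x hx => (c x).continuousAt_symm (hT x hx), ?_⟩
  have htarget : ∀ᶠ y in 𝓝 y₀, ∀ x ∈ hfin.toFinset, y ∈ (c x).target :=
    (eventually_all_finset _).2 fun x hx => (c x).open_target.mem_nhds (hT x hx)
  -- near `y₀`, the fibres meet `K` only inside the chosen charts
  have hrest : ∀ᶠ y in 𝓝 y₀, y ∉ p '' (K \ ⋃ x ∈ hfin.toFinset, (c x).source) := by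
    refine ((hK.diff (isOpen_biUnion fun x _ => (c x).open_source)).image
      hpc).isClosed.isOpen_compl.mem_nhds ?_
    rintro ⟨x, ⟨hxK, hxU⟩, hpx⟩
    exact hxU (mem_biUnion (hfin.mem_toFinset.2 ⟨hpx, hxK⟩) (hxc x))
  filter_upwards [htarget, hrest] with y hyT hyK
  refine ⟨fun x hx => ?_, fun x₁ h₁ x₂ h₂ heq => ?_, fun x' ⟨hx'y, hx'K⟩ => ?_⟩
  · rw [← hc x]
    exact (c x).right_inv (hyT x hx)
  · replace heq : (c x₁).symm y = (c x₂).symm y := heq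
    by_contra hne
    have m₁ := (c x₁).map_target (hyT x₁ h₁)
    have m₂ := (c x₂).map_target (hyT x₂ h₂)
    exact Set.disjoint_left.1 (hUdisj (hfin.mem_toFinset.1 h₁) (hfin.mem_toFinset.1 h₂) hne) m₁.2
      (heq ▸ m₂.2)
  · obtain ⟨x, hx, hx'⟩ := mem_iUnion₂.1 (not_not.1 fun h => hyK ⟨x', ⟨hx'K, h⟩, hx'y⟩)
    refine ⟨x, hx, ?_⟩
    have : c x x' = y := by rw [hc x]; exact hx'y
    simp only [← this, (c x).left_inv hx']

theorem IsLocalHomeomorph.continuous_finsum_fiber [T2Space X] [T2Space Y] [AddCommMonoid M]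
    [TopologicalSpace M] [ContinuousAdd M] (hp : IsLocalHomeomorph p) {φ : X → M}
    (hφ : Continuous φ) (hφc : HasCompactSupport φ) :
    Continuous fun y => ∑ᶠ x ∈ p ⁻¹' {y}, φ x := by
  classical
  refine continuous_iff_continuousAt.2 fun y₀ => ?_
  obtain ⟨T, σ, hσ, hy⟩ := hp.exists_local_sections hφc y₀
  have hsum : ContinuousAt (fun y => ∑ x ∈ T, φ (σ x y)) y₀ :=
    tendsto_finsetSum T fun x hx => hφ.continuousAt.comp (hσ x hx)
  refine hsum.congr ?_
  filter_upwards [hy] with y ⟨hpσ, hinj, hcover⟩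
  rw [← sum_image hinj]
  refine (finsum_mem_eq_sum_of_subset φ (fun x hx => ?_) ?_).symm
  · simpa using hcover ⟨hx.1, subset_tsupport φ hx.2⟩
  · simpa [Set.subset_def] using hpσ

theorem Continuous.hasCompactSupport_finsum_fiber [R1Space Y] [AddCommMonoid M]
    (hp : Continuous p) {φ : X → M} (hφc : HasCompactSupport φ) :
    HasCompactSupport fun y => ∑ᶠ x ∈ p ⁻¹' {y}, φ x :=
  HasCompactSupport.intro (hφc.image hp) fun _ hy =>
    finsum_mem_of_eqOn_zero fun x hx => by_contra fun hne => hy ⟨x, subset_tsupport φ hne, hx⟩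

end FiberSum

section Refinement

variable {G ι κ : Type*} [AddCommGroup G] [Lattice G] [IsOrderedAddMonoid G]

theorem exists_sum_eq_of_le_sum (t : Finset κ) {y : κ → G} (hy : ∀ j, 0 ≤ y j) {g : G}
    (hg : 0 ≤ g) (hgy : g ≤ ∑ j ∈ t, y j) :
    ∃ a : κ → G, (∀ j, 0 ≤ a j ∧ a j ≤ y j) ∧ ∑ j ∈ t, a j = g := by
  classical
  induction t using Finset.induction_on generalizing g with
  | empty => exact ⟨0, fun j => ⟨le_rfl, hy j⟩, (le_antisymm (by simpa using hgy) hg).symm⟩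
  | insert j₀ t hj₀ ih =>
    rw [sum_insert hj₀] at hgy
    obtain ⟨a, ha, hsum⟩ := ih (g := g - g ⊓ y j₀) (sub_nonneg.2 inf_le_left) <| by
      rw [sub_inf, sub_self]
      exact sup_le (sum_nonneg fun j _ => hy j) (sub_le_iff_le_add'.2 hgy)
    refine ⟨Function.update a j₀ (g ⊓ y j₀), fun j => ?_, ?_⟩
    · rcases eq_or_ne j j₀ with rfl | hj
      · simpa using le_inf hg (hy j)
      · simpa [hj] using ha j
    · rw [sum_insert hj₀, Function.update_self, sum_update_of_notMem hj₀, hsum]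
      abel

/-- Riesz refinement in a lattice-ordered group. -/
theorem exists_refinement_of_sum_eq (s : Finset ι) (t : Finset κ) {x : ι → G} {y : κ → G}
    (hx : ∀ i, 0 ≤ x i) (hy : ∀ j, 0 ≤ y j) (h : ∑ i ∈ s, x i = ∑ j ∈ t, y j) :
    ∃ z : ι → κ → G, (∀ i j, 0 ≤ z i j) ∧ (∀ i ∈ s, ∑ j ∈ t, z i j = x i) ∧
      ∀ j ∈ t, ∑ i ∈ s, z i j = y j := by
  classical
  induction s using Finset.induction_on generalizing y with
  | empty =>
    refine ⟨0, fun _ _ => le_rfl, by simp, fun j hj => ?_⟩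
    rw [sum_empty] at h
    simpa using ((sum_eq_zero_iff_of_nonneg fun j _ => hy j).1 h.symm j hj).symm
  | insert i₀ s hi₀ ih =>
    rw [sum_insert hi₀] at h
    obtain ⟨a, ha, hasum⟩ := exists_sum_eq_of_le_sum t hy (hx i₀)
      (h ▸ le_add_of_nonneg_right (sum_nonneg fun i _ => hx i))
    obtain ⟨z, hz, hrow, hcol⟩ := ih (y := y - a) (fun j => sub_nonneg.2 (ha j).2) <| by
      simp only [Pi.sub_apply, sum_sub_distrib, hasum, ← h, add_sub_cancel_left]
    refine ⟨Function.update z i₀ a, fun i j => ?_, fun i hi => ?_, fun j hj => ?_⟩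
    · rcases eq_or_ne i i₀ with rfl | hi
      · simpa using (ha j).1
      · simpa [hi] using hz i j
    · rcases mem_insert.1 hi with rfl | hi
      · simpa using hasum
      · simpa [ne_of_mem_of_not_mem hi hi₀] using hrow i hi
    · have hs : ∀ i ∈ s, Function.update z i₀ a i j = z i j := fun i hi => by
        rw [Function.update_of_ne (ne_of_mem_of_not_mem hi hi₀)]
      rw [sum_insert hi₀, Function.update_self, sum_congr rfl hs, hcol j hj]
      simp

end Refinement

open scoped CompactlySupported in
theorem exists_ccPos_refinement {V ι κ : Type*} [TopologicalSpace V] [Fintype ι] [Fintype κ]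
    {x : ι → V → ℤ} {y : κ → V → ℤ} (hx : ∀ i, x i ∈ CcPosV V) (hy : ∀ j, y j ∈ CcPosV V)
    (h : ∑ i, x i = ∑ j, y j) :
    ∃ z : ι → κ → V → ℤ, (∀ i j, z i j ∈ CcPosV V) ∧ (∀ i, ∑ j, z i j = x i) ∧
      ∀ j, ∑ i, z i j = y j := by
  let x' : ι → C_c(V, ℤ) := fun i => ⟨⟨x i, (hx i).1⟩, (hx i).2.1⟩
  let y' : κ → C_c(V, ℤ) := fun j => ⟨⟨y j, (hy j).1⟩, (hy j).2.1⟩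
  obtain ⟨z, hz, hrow, hcol⟩ := exists_refinement_of_sum_eq univ univ (x := x') (y := y')
    (fun i v => (hx i).2.2 v) (fun j v => (hy j).2.2 v)
    (DFunLike.coe_injective (by simpa [x', y'] using h))
  refine ⟨fun i j => z i j, fun i j => ⟨(z i j).continuous, (z i j).hasCompactSupport, hz i j⟩,
    fun i => ?_, fun j => ?_⟩
  · simpa [x'] using congrArg DFunLike.coe (hrow i (mem_univ i))
  · simpa [y'] using congrArg DFunLike.coe (hcol j (mem_univ j))

namespace TopGraph

variable {V E : Type*} [TopologicalSpace V] [TopologicalSpace E] {gr : TopGraph V E}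

theorem theta_theta (m n : ℕ) (f : V → ℤ) : gr.theta m (gr.theta n f) = gr.theta (m + n) f :=
  (Function.iterate_add_apply _ m n f).symm

theorem theta_succ (n : ℕ) (f : V → ℤ) : gr.theta (n + 1) f = gr.theta1 (gr.theta n f) :=
  Function.iterate_succ_apply' _ n f

variable (gr) in
theorem sim_equivalence : Equivalence gr.Sim where
  refl _ := ⟨0, 0, rfl⟩
  symm := fun ⟨p, q, h⟩ => ⟨q, p, h.symm⟩
  trans := fun ⟨p, q, h₁⟩ ⟨p', q', h₂⟩ => ⟨p' + p, q + q', by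
    rw [← theta_theta, h₁, theta_theta, add_comm, ← theta_theta, h₂, theta_theta]⟩

theorem sim_theta_self (n : ℕ) (f : V → ℤ) : gr.Sim (gr.theta n f) f := ⟨0, n, rfl⟩

theorem exists_theta_eq_of_forall_sim {ι : Type*} [Fintype ι] {a b : ι → V → ℤ}
    (h : ∀ i, gr.Sim (a i) (b i)) :
    ∃ (N : ℕ) (k : ι → ℕ), ∀ i, gr.theta N (a i) = gr.theta (k i) (b i) := by
  choose p q hpq using h
  refine ⟨univ.sup p, fun i => univ.sup p - p i + q i, fun i => ?_⟩
  rw [← theta_theta, ← hpq, theta_theta, Nat.sub_add_cancel (le_sup (mem_univ i))]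

theorem theta_zero (n : ℕ) : gr.theta n (0 : V → ℤ) = 0 :=
  Function.iterate_fixed (funext fun _ => finsum_mem_zero _) n

section Proper

variable [T2Space V]

theorem finite_fiber_inter_support (hproper : IsProperMap gr.r) {f : V → ℤ}
    (hf : HasCompactSupport f) (v : V) :
    ({e | gr.s e = v} ∩ Function.support (f ∘ gr.r)).Finite :=
  (gr.isLocalHomeomorph_s.finite_preimage_singleton_inter (hf.comp_isProperMap hproper) v).subset
    (inter_subset_inter_right _ (subset_tsupport _))

theorem theta1_add (hproper : IsProperMap gr.r) {f g : V → ℤ} (hf : HasCompactSupport f)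
    (hg : HasCompactSupport g) : gr.theta1 (f + g) = gr.theta1 f + gr.theta1 g :=
  funext fun v => finsum_mem_add_distrib' (finite_fiber_inter_support hproper hf v)
    (finite_fiber_inter_support hproper hg v)

theorem hasCompactSupport_theta1 (hproper : IsProperMap gr.r) {f : V → ℤ}
    (hf : HasCompactSupport f) : HasCompactSupport (gr.theta1 f) :=
  gr.isLocalHomeomorph_s.continuous.hasCompactSupport_finsum_fiber (hf.comp_isProperMap hproper)

theorem theta1_mem [T2Space E] (hproper : IsProperMap gr.r) {f : V → ℤ} (hf : f ∈ CcPosV V) :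
    gr.theta1 f ∈ CcPosV V :=
  ⟨gr.isLocalHomeomorph_s.continuous_finsum_fiber (hf.1.comp gr.continuous_r)
      (hf.2.1.comp_isProperMap hproper),
    hasCompactSupport_theta1 hproper hf.2.1,
    fun _ => finsum_nonneg fun _ => finsum_nonneg fun _ => hf.2.2 _⟩

theorem theta_mem [T2Space E] (hproper : IsProperMap gr.r) (n : ℕ) {f : V → ℤ} (hf : f ∈ CcPosV V) :
    gr.theta n f ∈ CcPosV V :=
  MapsTo.iterate (fun _ => theta1_mem hproper) n hf

theorem hasCompactSupport_theta (hproper : IsProperMap gr.r) (n : ℕ) {f : V → ℤ}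
    (hf : HasCompactSupport f) : HasCompactSupport (gr.theta n f) :=
  MapsTo.iterate (s := {f | HasCompactSupport f}) (fun _ => hasCompactSupport_theta1 hproper) n hf

theorem theta_add (hproper : IsProperMap gr.r) (n : ℕ) {f g : V → ℤ} (hf : HasCompactSupport f)
    (hg : HasCompactSupport g) : gr.theta n (f + g) = gr.theta n f + gr.theta n g := by
  induction n with
  | zero => rfl
  | succ n ih =>
    rw [theta_succ, theta_succ, theta_succ, ih, theta1_add hproper
      (hasCompactSupport_theta hproper n hf) (hasCompactSupport_theta hproper n hg)]

theorem theta_sum (hproper : IsProperMap gr.r) (n : ℕ) {ι : Type*} (s : Finset ι)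
    {F : ι → V → ℤ} (hF : ∀ i ∈ s, HasCompactSupport (F i)) :
    gr.theta n (∑ i ∈ s, F i) = ∑ i ∈ s, gr.theta n (F i) := by
  classical
  induction s using Finset.induction_on with
  | empty => exact theta_zero n
  | insert i s hi ih =>
    have hsum : HasCompactSupport (∑ j ∈ s, F j) :=
      sum_induction _ _ (fun _ _ => HasCompactSupport.add) HasCompactSupport.zero
        fun j hj => hF j (mem_insert_of_mem hj)
    rw [sum_insert hi, sum_insert hi, theta_add hproper n (hF i (mem_insert_self i s)) hsum,
      ih fun j hj => hF j (mem_insert_of_mem hj)]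

end Proper

theorem approx_of_fintype {ι : Type*} [Fintype ι] {f g : V → ℤ} (a b : ι → V → ℤ)
    (hab : ∀ i, a i ∈ CcPosV V ∧ b i ∈ CcPosV V) (hf : gr.Sim f (∑ i, a i))
    (hg : gr.Sim g (∑ i, b i)) (hsim : ∀ i, gr.Sim (a i) (b i)) : gr.Approx f g := by
  refine ⟨univ.toList.map fun i => (a i, b i), ?_, ?_, ?_, ?_⟩
  · simpa using hab
  · simpa [sum_map_toList] using hf
  · simpa [sum_map_toList] using hg
  · simpa using hsim

theorem Approx.exists_fin {f g : V → ℤ} (h : gr.Approx f g) :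
    ∃ (n : ℕ) (a b : Fin n → V → ℤ), (∀ i, a i ∈ CcPosV V ∧ b i ∈ CcPosV V) ∧
      gr.Sim f (∑ i, a i) ∧ gr.Sim g (∑ i, b i) ∧ ∀ i, gr.Sim (a i) (b i) := by
  obtain ⟨L, hL, hf, hg, hsim⟩ := h
  refine ⟨L.length, fun i => L[i].1, fun i => L[i].2, fun i => hL _ (L.getElem_mem _), ?_, ?_,
    fun i => hsim _ (L.getElem_mem _)⟩
  · simpa using hf
  · simpa using hg

theorem approx_refl {f : V → ℤ} (hf : f ∈ CcPosV V) : gr.Approx f f := by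
  have hff := (sim_equivalence gr).refl f
  exact ⟨[(f, f)], by simpa using hf, by simpa using hff, by simpa using hff, by simpa using hff⟩

theorem Approx.symm {f g : V → ℤ} (h : gr.Approx f g) : gr.Approx g f := by
  obtain ⟨n, a, b, hab, hf, hg, hsim⟩ := h.exists_fin
  exact approx_of_fintype b a (fun i => (hab i).symm) hg hf
    fun i => (sim_equivalence gr).symm (hsim i)

theorem sim_sum_of_theta_eq [T2Space V] (hproper : IsProperMap gr.r) {ι κ : Type*} [Fintype ι]
    [Fintype κ] {f : V → ℤ} {a : ι → V → ℤ} {z : ι → κ → V → ℤ} (ha : ∀ i, HasCompactSupport (a i))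
    (hz : ∀ i j, HasCompactSupport (z i j)) {N : ℕ} {S : ι → ℕ}
    (h : ∀ i, gr.theta N (a i) = gr.theta (S i) (∑ j, z i j)) (hf : gr.Sim f (∑ i, a i)) :
    gr.Sim f (∑ i, ∑ j, gr.theta (S i) (z i j)) := by
  have hsum : ∑ i, ∑ j, gr.theta (S i) (z i j) = gr.theta N (∑ i, a i) := by
    rw [theta_sum hproper N _ fun i _ => ha i]
    exact sum_congr rfl fun i _ => by rw [h i, theta_sum hproper _ _ fun j _ => hz i j]
  rw [hsum]
  exact (sim_equivalence gr).trans hf ((sim_equivalence gr).symm (sim_theta_self N _))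

theorem Approx.trans [T2Space V] [T2Space E] (hproper : IsProperMap gr.r) {f g h : V → ℤ}
    (hfg : gr.Approx f g) (hgh : gr.Approx g h) : gr.Approx f h := by
  have hsim := sim_equivalence gr
  obtain ⟨n, a, b, hab, hfa, hgb, hsimab⟩ := hfg.exists_fin
  obtain ⟨m, a', b', hab', hga', hhb', hsimab'⟩ := hgh.exists_fin
  obtain ⟨p, q, hpq⟩ := hsim.trans (hsim.symm hgb) hga'
  rw [theta_sum hproper p _ fun i _ => (hab i).2.2.1,
    theta_sum hproper q _ fun j _ => (hab' j).1.2.1] at hpq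
  obtain ⟨z, hz, hrow, hcol⟩ := exists_ccPos_refinement
    (fun i => theta_mem hproper p (hab i).2) (fun j => theta_mem hproper q (hab' j).1) hpq
  obtain ⟨N, S, hS⟩ := exists_theta_eq_of_forall_sim fun i =>
    hsim.trans (hsimab i) (hsim.symm (sim_theta_self p (b i)))
  obtain ⟨M, T, hT⟩ := exists_theta_eq_of_forall_sim fun j =>
    hsim.trans (hsim.symm (hsimab' j)) (hsim.symm (sim_theta_self q (a' j)))
  refine approx_of_fintype (fun k : Fin n × Fin m => gr.theta (S k.1) (z k.1 k.2))
    (fun k => gr.theta (T k.2) (z k.1 k.2))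
    (fun k => ⟨theta_mem hproper _ (hz _ _), theta_mem hproper _ (hz _ _)⟩) ?_ ?_
    fun k => hsim.trans (sim_theta_self _ _) (hsim.symm (sim_theta_self _ _))
  · rw [Fintype.sum_prod_type]
    exact sim_sum_of_theta_eq hproper (fun i => (hab i).1.2.1) (fun i j => (hz i j).2.1)
      (fun i => by rw [hS i, hrow i]) hfa
  · rw [Fintype.sum_prod_type_right]
    exact sim_sum_of_theta_eq hproper (fun j => (hab' j).2.2.1) (fun j i => (hz i j).2.1)
      (fun j => by rw [hT j, hcol j]) hhb'

end TopGraph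

theorem sim_and_approx_equivalence_general {V E : Type*}
    [TopologicalSpace V] [T2Space V]
    [TopologicalSpace E] [T2Space E]
    (gr : TopGraph V E) (hproper : IsProperMap gr.r) :
    Equivalence (fun f g : ↥(CcPosV V) => gr.Sim f.1 g.1) ∧
    Equivalence (fun f g : ↥(CcPosV V) => gr.Approx f.1 g.1) :=
  ⟨gr.sim_equivalence.comap Subtype.val,
    ⟨fun f => TopGraph.approx_refl f.2, TopGraph.Approx.symm,
      fun hfg hgh => hfg.trans hproper hgh⟩⟩

/-- **Statement 17.** Let `E` be a topological graph with `E⁰` totally disconnected and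
with `r` proper and surjective.  Then `∼` and `≈` are equivalence relations on
`C_c(E⁰, ℤ)⁺`. -/
theorem sim_and_approx_equivalence {V E : Type*}
    [TopologicalSpace V] [LocallyCompactSpace V] [T2Space V] [SecondCountableTopology V]
    [TotallyDisconnectedSpace V]
    [TopologicalSpace E] [LocallyCompactSpace E] [T2Space E] [SecondCountableTopology E]
    (gr : TopGraph V E) (hproper : IsProperMap gr.r) (hsurj : Function.Surjective gr.r) :
    Equivalence (fun f g : ↥(CcPosV V) => gr.Sim f.1 g.1) ∧
    Equivalence (fun f g : ↥(CcPosV V) => gr.Approx f.1 g.1) :=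
  sim_and_approx_equivalence_general gr hproper
end
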